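/- arXiv:2502.07567 — 2 statements merged into one kernel-verified Lean document; each statement's English description precedes it below -/
import Mathlib

section
/- Let 1 ≤ r ≤ m. For every natural number i with i ≤ 2(m − r), the i-th homotopy group π_i(V_r(ℂ^m), e) based at the standard frame e is trivial (a subsingleton); in particular V_r(ℂ^m) is path-connected and simply connected when r < m. -/
open scoped Topology

/-- The complex Stiefel manifold `V_r(ℂ^m)`: the set of `r`-tuples of vectors of `ℂ^m`
that are linearly independent over `ℂ`, topologized as a subspace of the product. -/
def complexStiefel (m r : ℕ) : Set (Fin r → EuclideanSpace ℂ (Fin m)) :=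
  { v | LinearIndependent ℂ v }

/-- The standard frame: the first `r` standard basis vectors of `ℂ^m`. -/
noncomputable def stdFrame (m r : ℕ) (h : r ≤ m) : Fin r → EuclideanSpace ℂ (Fin m) :=
  fun i => EuclideanSpace.single (Fin.castLE h i) 1

theorem stdFrame_mem (m r : ℕ) (h : r ≤ m) : stdFrame m r h ∈ complexStiefel m r := by
  have hb : LinearIndependent ℂ (fun i : Fin m => EuclideanSpace.single i (1 : ℂ)) := by
    have hfun : (fun i : Fin m => EuclideanSpace.single i (1 : ℂ)) =
        ⇑(EuclideanSpace.basisFun (Fin m) ℂ) := by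
      funext i
      rw [EuclideanSpace.basisFun_apply]
    rw [hfun, ← OrthonormalBasis.coe_toBasis]
    exact (EuclideanSpace.basisFun (Fin m) ℂ).toBasis.linearIndependent
  exact hb.comp (Fin.castLE h) (Fin.castLE_injective h)

/-! The linearly dependent `r`-frames in `ℂ^m` are covered by the images of the `C¹` maps
`dependentTuple ℂ j` (the `j`-th vector is a combination of the others), whose domains have real
dimension `2(r - 1)(m + 1)`, i.e. codimension `2(m - r + 1)` in `ℂ^{rm}`. Contract a sphere of
`V_r(ℂ^m)` along straight lines in `ℂ^{rm}`, approximate this `(i + 1)`-cube by a smooth map and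
translate it by a small vector: as `i + 1 < 2(m - r + 1)`, the bad translations form a set of
Hausdorff dimension `< 2rm`, so a generic one misses every dependent frame. Splicing the translated
cube into the straight-line contraction away from the sphere gives a null-homotopy in
`V_r(ℂ^m)`. -/

open scoped unitInterval Topology Topology.Homotopy ContDiff
open Metric Set Module

theorem exists_continuous_mem_of_dist_lt {X E : Type*} [TopologicalSpace X]
    [NormedAddCommGroup E] [NormedSpace ℝ E] {K V : Set E} (hK : K.Nonempty) {δ : ℝ}
    (hδ : 0 < δ) (hKV : thickening δ K ⊆ V) {F P : X → E}
    (hF : Continuous F) (hP : Continuous P) (hPV : ∀ q, P q ∈ V)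
    (hPF : ∀ q, dist (P q) (F q) < δ / 2) :
    ∃ H : X → E, Continuous H ∧ (∀ q, H q ∈ V) ∧ ∀ q, F q ∈ K → H q = F q := by
  -- `H = F` on `F ⁻¹' K`, `H = P` where `F` is `δ / 2`-far from `K`, and in between `F` is
  -- `δ / 2`-close to `K` while `H` is `δ / 2`-close to `F`
  set ρ : X → ℝ := fun q => min 1 (2 * infDist (F q) K / δ)
  refine ⟨fun q => F q + ρ q • (P q - F q), by fun_prop, fun q => ?_, fun q hq => ?_⟩
  · rcases le_or_gt 1 (2 * infDist (F q) K / δ) with h | h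
    · simpa [ρ, min_eq_left h] using hPV q
    · have hρ1 : ρ q ≤ 1 := min_le_left _ _
      have hρ0 : 0 ≤ ρ q :=
        le_min zero_le_one (by have := infDist_nonneg (x := F q) (s := K); positivity)
      obtain ⟨z, hz, hFz⟩ := (infDist_lt_iff hK).1 <| show infDist (F q) K < δ / 2 by
        rw [div_lt_one hδ] at h; linarith
      refine hKV (mem_thickening_iff.2 ⟨z, hz, ?_⟩)
      calc dist (F q + ρ q • (P q - F q)) z ≤ ‖ρ q • (P q - F q)‖ + dist (F q) z := by
            rw [dist_eq_norm, dist_eq_norm, add_sub_right_comm, add_comm]; exact norm_add_le _ _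
        _ ≤ dist (P q) (F q) + dist (F q) z := by
            rw [norm_smul, Real.norm_of_nonneg hρ0, ← dist_eq_norm]
            gcongr; exact mul_le_of_le_one_left dist_nonneg hρ1
        _ < δ / 2 + δ / 2 := add_lt_add (hPF q) hFz
        _ = δ := add_halves δ
  · simp [ρ, infDist_zero_of_mem hq]

theorem exists_norm_lt_forall_add_ne_of_contDiff {ι : Type*} [Countable ι] {P : ι → Type*}
    [∀ j, NormedAddCommGroup (P j)] [∀ j, NormedSpace ℝ (P j)] [∀ j, FiniteDimensional ℝ (P j)]
    {D E : Type*} [NormedAddCommGroup D] [NormedSpace ℝ D] [FiniteDimensional ℝ D]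
    [NormedAddCommGroup E] [NormedSpace ℝ E] [FiniteDimensional ℝ E]
    {Ψ : ∀ j, P j → E} (hΨ : ∀ j, ContDiff ℝ 1 (Ψ j)) {G : D → E} (hG : ContDiff ℝ 1 G)
    (hdim : ∀ j, finrank ℝ (P j) + finrank ℝ D < finrank ℝ E) {ε : ℝ} (hε : 0 < ε) :
    ∃ w : E, ‖w‖ < ε ∧ ∀ j p z, G z + w ≠ Ψ j p := by
  rcases isEmpty_or_nonempty ι with hι | ⟨⟨j₀⟩⟩
  · exact ⟨0, by simpa using hε, fun j => isEmptyElim j⟩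
  set B : Set E := ⋃ j, range fun q : P j × D => Ψ j q.1 - G q.2
  have hB : dimH B < finrank ℝ E := by
    refine (dimH_iUnion _).trans_lt (lt_of_le_of_lt (iSup_le fun j => ?_)
      (Nat.cast_lt.2 (Nat.sub_lt (by have := hdim j₀; omega) one_pos)))
    refine (((hΨ j).comp contDiff_fst).sub (hG.comp contDiff_snd)).dimH_range_le.trans ?_
    have := hdim j
    exact Nat.cast_le.2 (by rw [finrank_prod]; omega)
  obtain ⟨w, hwB, hw⟩ := (dense_compl_of_dimH_lt_finrank hB).exists_mem_open isOpen_ball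
    ⟨0, mem_ball_self hε⟩
  refine ⟨w, mem_ball_zero_iff.1 hw, fun j p z hwp => hwB (mem_iUnion.2 ⟨j, (p, z), ?_⟩)⟩
  simp [← hwp]

theorem exists_contDiff_dist_lt_on_cube {N : Type*} [Fintype N] {E : Type*}
    [NormedAddCommGroup E] [NormedSpace ℝ E] [CompleteSpace E] {F : I × (I^N) → E}
    (hF : Continuous F) {ε : ℝ} (hε : 0 < ε) :
    ∃ G : ℝ × (N → ℝ) → E, ContDiff ℝ ∞ G ∧ ∀ q, dist (G (q.1, fun j => q.2 j)) (F q) < ε := by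
  set proj : ℝ × (N → ℝ) → I × (I^N) :=
    Prod.map (projIcc 0 1 zero_le_one) fun z j => projIcc 0 1 zero_le_one (z j)
  have hproj : UniformContinuous proj :=
    (LipschitzWith.projIcc zero_le_one).uniformContinuous.prodMap <| uniformContinuous_pi.2
      fun j => (LipschitzWith.projIcc zero_le_one).uniformContinuous.comp
        (Pi.uniformContinuous_proj _ j)
  obtain ⟨G, hG, hGF⟩ :=
    ((CompactSpace.uniformContinuous_of_continuous hF).comp hproj).exists_contDiff_dist_le hε
  refine ⟨G, hG, fun q => ?_⟩
  simpa [proj, Prod.map, projIcc_val] using hGF (q.1, fun j => q.2 j)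

theorem GenLoop.homotopic_const_of_continuous {N X : Type*} [TopologicalSpace X] {x : X}
    {γ : Ω^ N X x} {H : I × (I^N) → X} (hH : Continuous H) (h₀ : ∀ y, H (0, y) = γ y)
    (h₁ : ∀ y, H (1, y) = x) (hbd : ∀ t, ∀ y ∈ Cube.boundary N, H (t, y) = x) :
    GenLoop.Homotopic γ GenLoop.const :=
  ⟨{ toFun := H
     continuous_toFun := hH
     map_zero_left := h₀
     map_one_left := h₁
     prop' := fun t y hy => (hbd t y hy).trans (GenLoop.boundary γ y hy).symm }⟩

theorem HomotopyGroup.subsingleton_of_forall_homotopic_const {N X : Type*} [TopologicalSpace X]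
    {x : X} (h : ∀ γ : Ω^ N X x, GenLoop.Homotopic γ GenLoop.const) :
    Subsingleton (HomotopyGroup N X x) :=
  ⟨fun a b => Quotient.inductionOn₂' a b fun γ γ' => Quotient.sound ((h γ).trans (h γ').symm)⟩

section DependentTuple

variable {𝕜 W : Type*} {r : ℕ}

variable (𝕜) in
def dependentTuple [Semiring 𝕜] [AddCommMonoid W] [Module 𝕜 W] (j : Fin r)
    (p : ({k // k ≠ j} → W) × ({k // k ≠ j} → 𝕜)) : Fin r → W :=
  fun k => if h : k = j then ∑ l, p.2 l • p.1 l else p.1 ⟨k, h⟩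

theorem compl_setOf_linearIndependent_subset [DivisionRing 𝕜] [AddCommGroup W] [Module 𝕜 W] :
    {v : Fin r → W | LinearIndependent 𝕜 v}ᶜ ⊆ ⋃ j, range (dependentTuple 𝕜 j) := by
  intro v hv
  simp only [mem_compl_iff, mem_ofPred_eq, linearIndependent_iff_notMem_span, not_forall,
    not_not] at hv
  obtain ⟨j, hj⟩ := hv
  rw [show v '' (univ \ {j}) = range fun l : {k // k ≠ j} => v l by ext; simp] at hj
  obtain ⟨c, hc⟩ := (Submodule.mem_span_range_iff_exists_fun 𝕜).1 hj
  refine mem_iUnion.2 ⟨j, (fun l => v l, c), funext fun k => ?_⟩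
  by_cases hk : k = j
  · subst hk; simpa [dependentTuple] using hc
  · simp [dependentTuple, hk]

theorem contDiff_dependentTuple [NontriviallyNormedField 𝕜] [NormedAddCommGroup W]
    [NormedSpace 𝕜 W] (j : Fin r) {n : WithTop ℕ∞} :
    ContDiff 𝕜 n (dependentTuple 𝕜 (W := W) j) := by
  refine contDiff_pi.2 fun k => ?_
  by_cases hk : k = j
  · simp only [dependentTuple, dif_pos hk]
    exact ContDiff.sum fun l _ =>
      (contDiff_pi.1 contDiff_snd l).smul (contDiff_pi.1 contDiff_fst l)
  · simp only [dependentTuple, dif_neg hk]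
    exact contDiff_pi.1 contDiff_fst _

end DependentTuple

theorem GenLoop.homotopic_const_of_compl_subset_iUnion_range {E : Type*} [NormedAddCommGroup E]
    [NormedSpace ℝ E] [FiniteDimensional ℝ E] {ι : Type*} [Countable ι] {P : ι → Type*}
    [∀ j, NormedAddCommGroup (P j)] [∀ j, NormedSpace ℝ (P j)] [∀ j, FiniteDimensional ℝ (P j)]
    {V : Set E} (hV : IsOpen V) {Ψ : ∀ j, P j → E} (hΨ : ∀ j, ContDiff ℝ 1 (Ψ j))
    (hcover : Vᶜ ⊆ ⋃ j, range (Ψ j)) {n : ℕ}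
    (hdim : ∀ j, finrank ℝ (P j) + (n + 1) < finrank ℝ E) {x : V} (γ : Ω^ (Fin n) V x) :
    GenLoop.Homotopic γ GenLoop.const := by
  set f : (I^Fin n) → E := fun y => γ y
  have hf : Continuous f := continuous_subtype_val.comp γ.1.continuous
  set K : Set E := insert (x : E) (range f)
  have hKV : K ⊆ V := insert_subset x.2 (range_subset_iff.2 fun y => (γ y).2)
  obtain ⟨δ, hδ, hδK⟩ := ((isCompact_range hf).insert _).exists_thickening_subset_open hV hKV
  -- the straight-line contraction of `γ` in `E`, which may leave `V`
  set F : I × (I^Fin n) → E := fun q => f q.2 + (q.1 : ℝ) • ((x : E) - f q.2)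
  have hF : Continuous F := by fun_prop
  obtain ⟨G, hG, hGF⟩ := exists_contDiff_dist_lt_on_cube hF (by positivity : 0 < δ / 4)
  obtain ⟨w, hw, hwΨ⟩ :=
    exists_norm_lt_forall_add_ne_of_contDiff hΨ (hG.of_le (mod_cast le_top))
      (fun j => by simpa [finrank_prod, add_comm] using hdim j) (by positivity : 0 < δ / 4)
  set Q : I × (I^Fin n) → E := fun q => G (q.1, fun j => q.2 j) + w
  have hQ : Continuous Q := by have := hG.continuous; fun_prop
  have hQV : ∀ q, Q q ∈ V := fun q => by
    by_contra h
    obtain ⟨j, p, hp⟩ := mem_iUnion.1 (hcover h)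
    exact hwΨ j p _ hp.symm
  have hQF : ∀ q, dist (Q q) (F q) < δ / 2 := fun q => by
    calc dist (Q q) (F q) ≤ ‖w‖ + dist (G (q.1, fun j => q.2 j)) (F q) :=
          (dist_triangle _ _ _).trans_eq (by rw [dist_self_add_left])
      _ < δ / 4 + δ / 4 := add_lt_add hw (hGF q)
      _ = δ / 2 := by ring
  obtain ⟨H, hH, hHV, hHF⟩ :=
    exists_continuous_mem_of_dist_lt (insert_nonempty _ _) hδ hδK hF hQ hQV hQF
  refine GenLoop.homotopic_const_of_continuous (H := fun q => ⟨H q, hHV q⟩) (by fun_prop)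
    (fun y => Subtype.ext ?_) (fun y => Subtype.ext ?_) (fun t y hy => Subtype.ext ?_)
  · simpa [F] using hHF (0, y) (by simp [F])
  · simpa [F] using hHF (1, y) (by simp [F])
  · have hfy : f y = x := congrArg Subtype.val (GenLoop.boundary γ y hy)
    simpa [F, hfy] using hHF (t, y) (by simp [F, hfy])

theorem homotopyGroup_complexStiefel_subsingleton_general
    (m r : ℕ) (hrm : r ≤ m) (i : ℕ) (hi : i ≤ 2 * (m - r)) :
    Subsingleton
      (π_ i (complexStiefel m r)
        ⟨stdFrame m r hrm, stdFrame_mem m r hrm⟩) := by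
  refine HomotopyGroup.subsingleton_of_forall_homotopic_const fun γ =>
    GenLoop.homotopic_const_of_compl_subset_iUnion_range isOpen_setOfPred_linearIndependent
      (fun j => (contDiff_dependentTuple j).restrict_scalars ℝ)
      compl_setOf_linearIndependent_subset (fun j => ?_) γ
  obtain ⟨a, rfl⟩ : ∃ a, r = a + 1 := ⟨r - 1, by have := j.pos; omega⟩
  simp [finrank_real_of_complex, finrank_prod, finrank_pi_fintype, Fintype.card_subtype_compl]
  ring_nf
  omega

/-- For `1 ≤ r ≤ m` and `i ≤ 2(m − r)`, the homotopy group
`π_i(V_r(ℂ^m), e)` based at the standard frame is trivial. -/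
theorem homotopyGroup_complexStiefel_subsingleton
    (m r : ℕ) (hr : 1 ≤ r) (hrm : r ≤ m) (i : ℕ) (hi : i ≤ 2 * (m - r)) :
    Subsingleton
      (π_ i (complexStiefel m r)
        ⟨stdFrame m r hrm, stdFrame_mem m r hrm⟩) :=
  homotopyGroup_complexStiefel_subsingleton_general m r hrm i hi
end

section
/- Let 1 ≤ r ≤ m and let k be a natural number with 1 ≤ k and k < 2(m − r + 1). Then every continuous map f from the unit sphere {x ∈ EuclideanSpace ℝ (Fin k) : ‖x‖ = 1} to V_r(ℂ^m) admits a continuous extension F defined on the closed unit ball {x ∈ EuclideanSpace ℝ (Fin k) : ‖x‖ ≤ 1} with values in V_r(ℂ^m) such that F restricted to the sphere equals f. -/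
open scoped Topology

/-!
The `r`-frames form an open cone `V` in `M = (ℂ^m)^r`, and its complement, the dependent frames, is
a finite union of smooth images of a real vector space of dimension `(r - 1)(2m + 2)`. Averaging
`f` over a fine net of the sphere with tent weights gives a positively homogeneous, locally
Lipschitz map `G : ℝ^k → M` such that the segment from `f y` to `G y` stays in `V` for `‖y‖ = 1`.
As `k + 2(r - 1) < 2m`, the set `{ζ - G z}`, with `ζ` dependent, has Hausdorff dimension less than
`dim M`, so some `c` satisfies `G z + c ∈ V` for all `z`. By homogeneity `G x + (1 - ‖x‖) • c`
then lies in `V` on the ball. Put this map, rescaled, on the inner half ball and the straight-line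
homotopy from `G` to `f` on the outer annulus.
-/

open Set Metric Module

theorem LocallyLipschitz.smul_const {α 𝕜 E : Type*} [PseudoEMetricSpace α]
    [NontriviallyNormedField 𝕜] [SeminormedAddCommGroup E] [NormedSpace 𝕜 E] {φ : α → 𝕜}
    (hφ : LocallyLipschitz φ) (v : E) :
    LocallyLipschitz fun x => φ x • v :=
  (ContinuousLinearMap.toSpanSingleton 𝕜 v).lipschitz.locallyLipschitz.comp hφ

theorem locallyLipschitz_finset_sum {α ι E : Type*} [PseudoEMetricSpace α]
    [SeminormedAddCommGroup E] {s : Finset ι} {g : ι → α → E}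
    (hg : ∀ i ∈ s, LocallyLipschitz (g i)) : LocallyLipschitz fun x => ∑ i ∈ s, g i x := by
  classical
  induction s using Finset.induction_on with
  | empty => simpa using LocallyLipschitz.const 0
  | insert i s hi ih =>
    simp only [Finset.sum_insert hi]
    exact (hg i (Finset.mem_insert_self i s)).add
      (ih fun j hj => hg j (Finset.mem_insert_of_mem hj))

theorem Convex.centerMass_mem_of_ne_zero {R E ι : Type*} [Field R] [LinearOrder R]
    [IsStrictOrderedRing R] [AddCommGroup E] [Module R E] {s : Set E} (hs : Convex R s)
    {t : Finset ι} {w : ι → R} {z : ι → E} (hw₀ : ∀ i ∈ t, 0 ≤ w i) (hw : 0 < ∑ i ∈ t, w i)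
    (hz : ∀ i ∈ t, w i ≠ 0 → z i ∈ s) : t.centerMass w z ∈ s := by
  classical
  rw [← t.centerMass_filter_ne_zero]
  refine hs.centerMass_mem (fun i hi => hw₀ i (Finset.mem_filter.1 hi).1)
    (by rwa [Finset.sum_filter_ne_zero]) fun i hi => ?_
  exact hz i (Finset.mem_filter.1 hi).1 (Finset.mem_filter.1 hi).2

section ConeBump

variable {X : Type*} [NormedAddCommGroup X] [NormedSpace ℝ X]

/-- The positively homogeneous extension to `X` of the tent function `y ↦ max 0 (ρ - ‖y - t‖)`
on the unit sphere. -/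
def coneBump (ρ : ℝ) (t z : X) : ℝ :=
  max 0 (ρ * ‖z‖ - ‖z - ‖z‖ • t‖)

theorem coneBump_nonneg (ρ : ℝ) (t z : X) : 0 ≤ coneBump ρ t z :=
  le_max_left _ _

theorem coneBump_smul (ρ : ℝ) (t z : X) {c : ℝ} (hc : 0 ≤ c) :
    coneBump ρ t (c • z) = c * coneBump ρ t z := by
  simp only [coneBump, norm_smul, Real.norm_of_nonneg hc, mul_smul, ← smul_sub,
    mul_max_of_nonneg _ _ hc, mul_zero, mul_sub, mul_left_comm c ρ]

theorem coneBump_of_norm_eq_one (ρ : ℝ) (t : X) {y : X} (hy : ‖y‖ = 1) :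
    coneBump ρ t y = max 0 (ρ - dist y t) := by
  simp [coneBump, hy, dist_eq_norm]

theorem locallyLipschitz_coneBump (ρ : ℝ) (t : X) : LocallyLipschitz (coneBump ρ t) := by
  have hnorm : LocallyLipschitz fun z : X => ‖z‖ := lipschitzWith_one_norm.locallyLipschitz
  exact (((lipschitzWith_smul ρ).locallyLipschitz.comp hnorm).sub
    (lipschitzWith_one_norm.locallyLipschitz.comp
      (LocallyLipschitz.id.sub (hnorm.smul_const t)))).const_max 0

end ConeBump

theorem segment_smul_right_subset {M : Type*} [AddCommGroup M] [Module ℝ M] {V : Set M}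
    (hcone : ∀ s : ℝ, 0 < s → ∀ v ∈ V, s • v ∈ V) {u w : M} (h : segment ℝ u w ⊆ V) {s : ℝ}
    (hs : 0 < s) : segment ℝ u (s • w) ⊆ V := by
  rintro _ ⟨a, b, ha, hb, hab, rfl⟩
  have hl : 0 < a + b * s := by nlinarith [mul_nonneg hb hs.le]
  have hmem : (a / (a + b * s)) • u + (b * s / (a + b * s)) • w ∈ V :=
    h ⟨_, _, by positivity, by positivity, by field_simp, rfl⟩
  convert hcone _ hl _ hmem using 1
  simp only [smul_add, smul_smul, mul_div_cancel₀ _ hl.ne']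

theorem exists_homogeneous_locallyLipschitz_segment_subset {X M : Type*} [NormedAddCommGroup X]
    [NormedSpace ℝ X] [ProperSpace X] [NormedAddCommGroup M] [NormedSpace ℝ M] {V : Set M}
    (hV : IsOpen V) (hcone : ∀ s : ℝ, 0 < s → ∀ v ∈ V, s • v ∈ V) {f : X → M}
    (hf : ContinuousOn f (sphere 0 1)) (hfV : MapsTo f (sphere 0 1) V) :
    ∃ G : X → M, LocallyLipschitz G ∧ (∀ c : ℝ, 0 ≤ c → ∀ z, G (c • z) = c • G z) ∧
      ∀ y ∈ sphere (0 : X) 1, segment ℝ (f y) (G y) ⊆ V := by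
  classical
  have hS : IsCompact (sphere (0 : X) 1) := isCompact_sphere 0 1
  obtain ⟨δ, hδ, hδV⟩ := (hS.image_of_continuousOn hf).exists_thickening_subset_open hV
    (image_subset_iff.2 hfV)
  obtain ⟨ρ, hρ, hρf⟩ := Metric.uniformContinuousOn_iff.1
    (hS.uniformContinuousOn_of_continuous hf) δ hδ
  obtain ⟨T, hTS, hT, hcover⟩ := finite_cover_balls_of_compact hS hρ
  refine ⟨fun z => ∑ t ∈ hT.toFinset, coneBump ρ t z • f t,
    locallyLipschitz_finset_sum fun t _ => (locallyLipschitz_coneBump ρ t).smul_const (f t),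
    fun c hc z => by simp only [coneBump_smul _ _ _ hc, Finset.smul_sum, smul_smul],
    fun y hy => ?_⟩
  set w : X → ℝ := fun t => coneBump ρ t y
  have hw_nonneg : ∀ t ∈ hT.toFinset, 0 ≤ w t := fun t _ => coneBump_nonneg ρ t y
  obtain ⟨t₀, ht₀, hyt₀⟩ := mem_iUnion₂.1 (hcover hy)
  have hD : 0 < ∑ t ∈ hT.toFinset, w t := by
    refine Finset.sum_pos' hw_nonneg ⟨t₀, hT.mem_toFinset.2 ht₀, ?_⟩
    simp only [w, coneBump_of_norm_eq_one ρ t₀ (mem_sphere_zero_iff_norm.1 hy)]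
    exact lt_max_of_lt_right (sub_pos.2 (mem_ball.1 hyt₀))
  have hcm : hT.toFinset.centerMass w f ∈ ball (f y) δ := by
    refine (convex_ball _ _).centerMass_mem_of_ne_zero hw_nonneg hD fun t ht hwt => ?_
    have hyt : dist y t < ρ := by
      by_contra! hle
      exact hwt (by simp [w, coneBump_of_norm_eq_one ρ t (mem_sphere_zero_iff_norm.1 hy), hle])
    rw [mem_ball, dist_comm]
    exact hρf y hy t (hTS (hT.mem_toFinset.1 ht)) hyt
  have hGy : ∑ t ∈ hT.toFinset, w t • f t =
      (∑ t ∈ hT.toFinset, w t) • hT.toFinset.centerMass w f := by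
    rw [Finset.centerMass, smul_inv_smul₀ hD.ne']
  change segment ℝ (f y) (∑ t ∈ hT.toFinset, w t • f t) ⊆ V
  rw [hGy]
  exact segment_smul_right_subset hcone ((convex_ball _ _).segment_subset (mem_ball_self hδ) hcm
    |>.trans ((ball_subset_thickening (mem_image_of_mem f hy) δ).trans hδV)) hD

theorem exists_extension_of_segment_subset {X M : Type*} [NormedAddCommGroup X]
    [NormedSpace ℝ X] [AddCommGroup M] [Module ℝ M] [TopologicalSpace M] [ContinuousAdd M]
    [ContinuousSMul ℝ M] {V : Set M} {f g E : X → M} (hf : ContinuousOn f (sphere 0 1))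
    (hg : ContinuousOn g (sphere 0 1)) (hfg : ∀ y ∈ sphere (0 : X) 1, segment ℝ (f y) (g y) ⊆ V)
    (hE : Continuous E) (hEV : MapsTo E (closedBall 0 1) V) (hEg : EqOn E g (sphere 0 1)) :
    ∃ F : X → M, Continuous F ∧ MapsTo F (closedBall 0 1) V ∧ EqOn F f (sphere 0 1) := by
  have hproj : MapsTo (fun x : X => ‖x‖⁻¹ • x) {x | 1 / 2 ≤ ‖x‖} (sphere 0 1) := fun x hx => by
    have : x ≠ 0 := norm_pos_iff.1 (by simp only [mem_ofPred_eq] at hx; linarith)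
    simp [norm_smul, this]
  have hproj_cont : ContinuousOn (fun x : X => ‖x‖⁻¹ • x) {x | 1 / 2 ≤ ‖x‖} :=
    (continuous_norm.continuousOn.inv₀ fun x hx => by
      simp only [mem_ofPred_eq] at hx; linarith).smul continuousOn_id
  refine ⟨fun x => if ‖x‖ ≤ 1 / 2 then E ((2 : ℝ) • x) else
      (2 * ‖x‖ - 1) • f (‖x‖⁻¹ • x) + (2 - 2 * ‖x‖) • g (‖x‖⁻¹ • x), ?_, ?_, ?_⟩
  · refine continuous_if_le continuous_norm continuous_const
      (hE.comp (continuous_const_smul 2)).continuousOn ?_ fun x hx => ?_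
    · exact ((continuous_const.mul continuous_norm).sub continuous_const).continuousOn.smul
        (hf.comp hproj_cont hproj) |>.add <|
        (continuous_const.sub (continuous_const.mul continuous_norm)).continuousOn.smul
        (hg.comp hproj_cont hproj)
    · have hsph : (2 : ℝ) • x ∈ sphere (0 : X) 1 := by simp [norm_smul, hx]
      rw [hEg hsph, hx]
      norm_num
  · intro x hx
    have hx1 : ‖x‖ ≤ 1 := mem_closedBall_zero_iff.1 hx
    by_cases hhalf : ‖x‖ ≤ 1 / 2
    · simp only [hhalf, if_true]
      exact hEV (mem_closedBall_zero_iff.2 (by rw [norm_smul]; norm_num; linarith))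
    · simp only [hhalf, if_false]
      exact hfg _ (hproj (le_of_not_ge hhalf))
        ⟨_, _, by linarith, by linarith, by ring, rfl⟩
  · intro y hy
    have hy1 : ‖y‖ = 1 := mem_sphere_zero_iff_norm.1 hy
    norm_num [hy1]

theorem exists_extension_to_closedBall_of_isOpen_cone {X M : Type*} [NormedAddCommGroup X]
    [NormedSpace ℝ X] [ProperSpace X] [NormedAddCommGroup M] [NormedSpace ℝ M] {V : Set M}
    (hV : IsOpen V) (hcone : ∀ s : ℝ, 0 < s → ∀ v ∈ V, s • v ∈ V)
    (htrans : ∀ G : X → M, LocallyLipschitz G → ∃ c, ∀ z, G z + c ∈ V) {f : X → M}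
    (hf : ContinuousOn f (sphere 0 1)) (hfV : MapsTo f (sphere 0 1) V) :
    ∃ F : X → M, Continuous F ∧ MapsTo F (closedBall 0 1) V ∧ EqOn F f (sphere 0 1) := by
  obtain ⟨G, hG, hGsmul, hseg⟩ := exists_homogeneous_locallyLipschitz_segment_subset hV hcone hf hfV
  obtain ⟨c, hc⟩ := htrans G hG
  refine exists_extension_of_segment_subset (E := fun x => G x + (1 - ‖x‖) • c) hf
    hG.continuous.continuousOn hseg (by have := hG.continuous; fun_prop) (fun x hx => ?_)
    (fun y hy => by simp [mem_sphere_zero_iff_norm.1 hy])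
  rcases (mem_closedBall_zero_iff.1 hx).lt_or_eq with hlt | heq
  · have hs : 0 < 1 - ‖x‖ := sub_pos.2 hlt
    -- `G x + (1 - ‖x‖) • c = (1 - ‖x‖) • (G ((1 - ‖x‖)⁻¹ • x) + c)` by homogeneity of `G`
    convert hcone _ hs _ (hc ((1 - ‖x‖)⁻¹ • x)) using 1
    rw [hGsmul _ (inv_nonneg.2 hs.le), smul_add, smul_smul, mul_inv_cancel₀ hs.ne', one_smul]
  · simpa [heq] using hseg x (mem_sphere_zero_iff_norm.2 heq) (right_mem_segment ℝ _ _)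

theorem exists_forall_add_ne_of_locallyLipschitz {ι P X M : Type*} [Countable ι]
    [NormedAddCommGroup P] [NormedSpace ℝ P] [FiniteDimensional ℝ P]
    [NormedAddCommGroup X] [NormedSpace ℝ X] [FiniteDimensional ℝ X]
    [NormedAddCommGroup M] [NormedSpace ℝ M] [FiniteDimensional ℝ M]
    {Ψ : ι → P → M} (hΨ : ∀ i, LocallyLipschitz (Ψ i)) {G : X → M} (hG : LocallyLipschitz G)
    (hdim : finrank ℝ P + finrank ℝ X < finrank ℝ M) :
    ∃ c : M, ∀ i p z, G z + c ≠ Ψ i p := by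
  let Φ (i : ι) (q : P × X) : M := Ψ i q.1 - G q.2
  have hΦ (i : ι) : dimH (range (Φ i)) ≤ finrank ℝ (P × X) := by
    rw [← Real.dimH_univ_eq_finrank]
    exact dimH_range_le_of_locally_lipschitzOn <|
      ((hΨ i).comp LipschitzWith.prod_fst.locallyLipschitz).sub
        (hG.comp LipschitzWith.prod_snd.locallyLipschitz)
  have hsmall : dimH (⋃ i, range (Φ i)) < finrank ℝ M := by
    rw [dimH_iUnion]
    refine (iSup_le hΦ).trans_lt ?_
    rw [finrank_prod]
    exact_mod_cast hdim
  obtain ⟨c, hc⟩ := (dense_compl_of_dimH_lt_finrank hsmall).nonempty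
  refine ⟨c, fun i p z h => hc (mem_iUnion.2 ⟨i, (p, z), ?_⟩)⟩
  simp only [Φ, ← h, add_sub_cancel_left]

theorem exists_eq_insertNth_sum_of_not_linearIndependent {K V : Type*} [DivisionRing K]
    [AddCommGroup V] [Module K V] {n : ℕ} {v : Fin (n + 1) → V}
    (hv : ¬ LinearIndependent K v) :
    ∃ (j : Fin (n + 1)) (w : Fin n → V) (a : Fin n → K),
      v = j.insertNth (α := fun _ => V) (∑ l, a l • w l) w := by
  obtain ⟨j, hj⟩ : ∃ j, v j ∈ Submodule.span K (range (v ∘ j.succAbove)) := by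
    simpa [linearIndependent_iff_notMem_span, range_comp, compl_eq_univ_sdiff] using hv
  obtain ⟨a, ha⟩ := (Submodule.mem_span_range_iff_exists_fun K).1 hj
  exact ⟨j, j.removeNth v, a, (j.insertNth_self_removeNth v).symm.trans (by rw [← ha]; rfl)⟩

theorem contDiff_insertNth_sum {E : Type*} [NormedAddCommGroup E] [NormedSpace ℂ E] {n : ℕ}
    (j : Fin (n + 1)) :
    ContDiff ℝ 1 fun p : (Fin n → E) × (Fin n → ℂ) =>
      j.insertNth (α := fun _ => E) (∑ l, p.2 l • p.1 l) p.1 := by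
  refine contDiff_pi.2 fun i => j.succAboveCases ?_ (fun l => ?_) i
  · simp only [Fin.insertNth_apply_same]
    fun_prop
  · simp only [Fin.insertNth_apply_succAbove]
    fun_prop

theorem exists_forall_linearIndependent_add {E X : Type*}
    [NormedAddCommGroup E] [NormedSpace ℂ E] [FiniteDimensional ℂ E]
    [NormedAddCommGroup X] [NormedSpace ℝ X] [FiniteDimensional ℝ X] {n : ℕ}
    (hdim : finrank ℝ X + 2 * n < 2 * finrank ℂ E) {G : X → Fin (n + 1) → E}
    (hG : LocallyLipschitz G) : ∃ c, ∀ z, LinearIndependent ℂ (G z + c) := by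
  have hE : finrank ℝ E = 2 * finrank ℂ E := finrank_real_of_complex E
  obtain ⟨c, hc⟩ := exists_forall_add_ne_of_locallyLipschitz
    (fun j => (contDiff_insertNth_sum (E := E) j).locallyLipschitz) hG (by
      simp only [finrank_prod, finrank_pi_fintype, hE, Complex.finrank_real_complex,
        Finset.sum_const, Finset.card_univ, Fintype.card_fin, smul_eq_mul]
      nlinarith)
  refine ⟨c, fun z => by_contra fun hdep => ?_⟩
  obtain ⟨j, w, a, hwa⟩ := exists_eq_insertNth_sum_of_not_linearIndependent hdep
  exact hc j (w, a) z hwa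

theorem extend_sphere_to_ball_complexStiefel_general
    (m r : ℕ) (hr : 1 ≤ r) (hrm : r ≤ m) (k : ℕ)
    (hkobs : k < 2 * (m - r + 1))
    (f : {x : EuclideanSpace ℝ (Fin k) // ‖x‖ = 1} → ↥(complexStiefel m r))
    (hf : Continuous f) :
    ∃ F : {x : EuclideanSpace ℝ (Fin k) // ‖x‖ ≤ 1} → ↥(complexStiefel m r),
      Continuous F ∧
        ∀ x : {x : EuclideanSpace ℝ (Fin k) // ‖x‖ = 1},
          F ⟨x.1, le_of_eq x.2⟩ = f x := by
  obtain ⟨n, rfl⟩ : ∃ n, r = n + 1 := ⟨r - 1, by omega⟩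
  let f₀ (x : EuclideanSpace ℝ (Fin k)) : Fin (n + 1) → EuclideanSpace ℂ (Fin m) :=
    if h : ‖x‖ = 1 then f ⟨x, h⟩ else 0
  have hf₀ : ContinuousOn f₀ (sphere 0 1) := by
    rw [continuousOn_iff_continuous_domRestrict]
    convert (continuous_subtype_val.comp hf).comp (continuous_subtype_val.subtype_mk
      fun y : sphere (0 : EuclideanSpace ℝ (Fin k)) 1 => mem_sphere_zero_iff_norm.1 y.2) using 1
    exact funext fun y => dif_pos _
  obtain ⟨F, hF, hFV, hFf⟩ := exists_extension_to_closedBall_of_isOpen_cone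
    (V := complexStiefel m (n + 1)) isOpen_setOfPred_linearIndependent
    (fun s hs v hv => hv.group_smul fun _ => Units.mk0 s hs.ne')
    (fun G hG => exists_forall_linearIndependent_add
      (by simp only [finrank_euclideanSpace, Fintype.card_fin]; omega) hG) hf₀
    (fun y hy => by simp [f₀, mem_sphere_zero_iff_norm.1 hy])
  refine ⟨fun x => ⟨F x, hFV (mem_closedBall_zero_iff.2 x.2)⟩,
    (hF.comp continuous_subtype_val).subtype_mk _, fun x => Subtype.ext ?_⟩
  exact (hFf (mem_sphere_zero_iff_norm.2 x.2)).trans (dif_pos x.2)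

/-- Below the obstruction dimension `2(m − r + 1)`, every continuous map from the unit
sphere `S^{k−1}` to the complex Stiefel manifold `V_r(ℂ^m)` extends continuously to the
closed unit ball. -/
theorem extend_sphere_to_ball_complexStiefel
    (m r : ℕ) (hr : 1 ≤ r) (hrm : r ≤ m) (k : ℕ) (hk : 1 ≤ k)
    (hkobs : k < 2 * (m - r + 1))
    (f : {x : EuclideanSpace ℝ (Fin k) // ‖x‖ = 1} → ↥(complexStiefel m r))
    (hf : Continuous f) :
    ∃ F : {x : EuclideanSpace ℝ (Fin k) // ‖x‖ ≤ 1} → ↥(complexStiefel m r),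
      Continuous F ∧
        ∀ x : {x : EuclideanSpace ℝ (Fin k) // ‖x‖ = 1},
          F ⟨x.1, le_of_eq x.2⟩ = f x :=
  extend_sphere_to_ball_complexStiefel_general m r hr hrm k hkobs f hf
end
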